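/- Fix $k \ge 1$ and let $v \in V$ be a simple vector. Writing $M(q,z_1,z_2)$ for the pentagon transfer matrix, one has the decomposition $M(q,z_1,z_2) v(q,z_1,qz_2) = ((A+B+C+D+E)v)(q,z_1,z_2)$, where $A,B,C,D,E$ are the extremal operators defined below, provided all of $A v, Bv, Cv, Dv, Ev$ are defined. -/

import Mathlib

/-!
After the shift, the entries of `M` vanish outside the pentagon
`{l-i ≤ i' ≤ l' ≤ k-i} ∪ {i' < l-i ≤ l' ≤ k-i}`. Up to the factor `(z₂ SP)^i`, the sum over the
triangle is `SR^(l-i)` times the complete homogeneous sum of degree `k-l` in `SP, z₁z₂ SQ, SR`, and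
the sum over the rectangle is a product of two geometric sums. By partial fractions both are sums
of terms attached to their vertices; `A, C, E` are vertex terms of one region only, while `B` and
`D` each collect the terms of the two regions at a common vertex on the edge `i' = l-i`.
-/

namespace Extremal

/-- The field of rational functions in `q, z₁, z₂` over `ℚ`. -/
abbrev F := FractionRing (MvPolynomial (Fin 3) ℚ)

noncomputable def qF : F := algebraMap (MvPolynomial (Fin 3) ℚ) F (MvPolynomial.X 0)
noncomputable def z1F : F := algebraMap (MvPolynomial (Fin 3) ℚ) F (MvPolynomial.X 1)
noncomputable def z2F : F := algebraMap (MvPolynomial (Fin 3) ℚ) F (MvPolynomial.X 2)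

/-- The monomial `q^a z₁^b z₂^c`. -/
noncomputable def mono (a b c : ℕ) : F := qF ^ a * z1F ^ b * z2F ^ c

/-- The entry `M_{i,l}^{i',l'}` of `M(q,z₁,z₂)` as a rational function
(inequalities written additively to avoid truncated subtraction). -/
noncomputable def Ment (k i l i' l' : ℕ) : F :=
  if l ≤ i' + i ∧ i' ≤ l' ∧ l' + i ≤ k then (qF * z1F * z2F) ^ (l' - i') * z2F ^ i
  else if i' + i < l ∧ l ≤ l' + i ∧ l' + i ≤ k then (qF * z1F * z2F) ^ (l' + i - l) * z2F ^ i
  else 0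

open Finset

section VertexSums

variable {K : Type*} [Field K]

theorem geom₂_sum_succ_eq_vertex_sum {a b : K} (hab : a ≠ b) (ha : a ≠ 0) (hb : b ≠ 0) (p : ℕ) :
    ∑ j ∈ range (p + 1), a ^ j * b ^ (p - j) = a ^ p / (1 - b / a) + b ^ p / (1 - a / b) := by
  have h := geom₂_sum hab (p + 1)
  simp only [Nat.add_sub_cancel] at h
  rw [h]
  field_simp
  ring

/-- The rectangle misses its edge `i = m`, hence the extra factor `y / r` at the vertex `r ^ m`. -/
theorem sum_pow_sub_mul_pow_eq_vertex_sum {y r : K} (hry : r ≠ y) (hy : y ≠ 0) (hr : r ≠ 0)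
    (m : ℕ) :
    ∑ i ∈ range m, y ^ (m - i) * r ^ i = y ^ m / (1 - r / y) + y / r * r ^ m / (1 - y / r) := by
  have h : ∑ i ∈ range m, y ^ (m - i) * r ^ i = y * ∑ i ∈ range m, r ^ i * y ^ (m - 1 - i) := by
    rw [mul_sum]
    refine sum_congr rfl fun i hi => ?_
    rw [show m - i = m - 1 - i + 1 by grind]
    ring
  rw [h, geom₂_sum hry]
  field_simp
  ring

theorem triangle_sum_eq_vertex_sum {a b c : K} (hab : a ≠ b) (hac : a ≠ c) (hbc : b ≠ c)
    (ha : a ≠ 0) (hb : b ≠ 0) (hc : c ≠ 0) (n : ℕ) :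
    ∑ s ∈ range (n + 1), c ^ s * ∑ j ∈ range (n - s + 1), a ^ j * b ^ (n - s - j) =
      a ^ n / ((1 - b / a) * (1 - c / a)) + b ^ n / ((1 - a / b) * (1 - c / b))
        + c ^ n / ((1 - a / c) * (1 - b / c)) := by
  have row : ∀ s ∈ range (n + 1), c ^ s * ∑ j ∈ range (n - s + 1), a ^ j * b ^ (n - s - j) =
      (a * (c ^ s * a ^ (n - s)) - b * (c ^ s * b ^ (n - s))) / (a - b) := by
    intro s _
    rw [geom₂_sum_succ_eq_vertex_sum hab ha hb]
    field_simp
    ring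
  rw [sum_congr rfl row, ← sum_div, sum_sub_distrib, ← mul_sum, ← mul_sum,
    geom₂_sum_succ_eq_vertex_sum hac.symm hc ha, geom₂_sum_succ_eq_vertex_sum hbc.symm hc hb]
  field_simp
  ring

theorem shared_vertex_term_eq {x y r : K} (hrx : r ≠ x) (hry : r ≠ y) (hx : x ≠ 0)
    (hr : r ≠ 0) :
    (1 - y / x) / ((1 - y / r) * (1 - r / x)) = 1 / (1 - r / x) + y / r / (1 - y / r) := by
  field_simp
  ring

theorem pentagon_sum_eq_vertex_sum {x y r w : K} (c : K) (hx : x ≠ 0) (hy : y ≠ 0) (hr : r ≠ 0)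
    (hw : w ≠ 0) (hux : w * y ≠ x) (hry : r ≠ y) (hrx : r ≠ x) (hur : w * y ≠ r) (m n : ℕ) :
    c * ((∑ i ∈ range m, y ^ (m - i) * r ^ i) * ∑ j ∈ range (n + 1), (w * y) ^ j * x ^ (n - j) +
        r ^ m * ∑ s ∈ range (n + 1), r ^ s *
          ∑ j ∈ range (n - s + 1), (w * y) ^ j * x ^ (n - s - j)) =
      x ^ n * y ^ m * c / ((1 - w * y / x) * (1 - r / y))
      + (1 - y / x) * x ^ n * r ^ m * c / ((1 - w * y / x) * (1 - y / r) * (1 - r / x))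
      + (w * y) ^ n * y ^ m * c / ((1 - x / (w * y)) * (1 - r / y))
      + (1 - w⁻¹) * (w * y) ^ n * r ^ m * c /
          ((1 - x / (w * y)) * (1 - r / (w * y)) * (1 - y / r))
      + r ^ n * r ^ m * c / ((1 - w * y / r) * (1 - x / r)) := by
  have hu : w * y ≠ 0 := mul_ne_zero hw hy
  -- the identities `B = B₁ + B₂` and `D = D₁ + D₂` of the shared vertices
  have hB := shared_vertex_term_eq hrx hry hx hr
  have hD : (1 - w⁻¹) / ((1 - y / r) * (1 - r / (w * y))) =
      1 / (1 - r / (w * y)) + y / r / (1 - y / r) := by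
    rw [← shared_vertex_term_eq hur.symm hry hu hr, div_mul_cancel_right₀ hy]
  rw [sum_pow_sub_mul_pow_eq_vertex_sum hry hy hr, geom₂_sum_succ_eq_vertex_sum hux hu hx,
    triangle_sum_eq_vertex_sum hux hur hrx.symm hu hx hr]
  simp only [div_eq_mul_inv, mul_inv] at hB hD ⊢
  linear_combination (-(x ^ n * r ^ m * c / (1 - w * y / x))) * hB
    - ((w * y) ^ n * r ^ m * c / (1 - x / (w * y))) * hD

end VertexSums

theorem sum_range_succ_eq_sum_shift_of_eq_zero {M : Type*} [AddCommMonoid M] {f : ℕ → M}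
    {a b c : ℕ} (h : a + b ≤ c) (hf : ∀ x, x < a ∨ a + b < x → f x = 0) :
    ∑ x ∈ range (c + 1), f x = ∑ j ∈ range (b + 1), f (a + j) := by
  rw [← sum_subset (s₁ := Ico a (a + b + 1)) (fun x hx => by grind)
      (fun x _ hx => hf x (by grind)), sum_Ico_eq_sum_range]
  congr 2
  omega

section Entries

variable {k i l i' l' : ℕ}

theorem Ment_eq_zero (h : l' < i' ∨ l' + i < l ∨ k < l' + i) : Ment k i l i' l' = 0 := by
  unfold Ment
  split_ifs <;> first | rfl | omega

theorem Ment_of_le (h : l ≤ i' + i) (h' : i' ≤ l') (hk : l' + i ≤ k) :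
    Ment k i l i' l' = (qF * z1F * z2F) ^ (l' - i') * z2F ^ i :=
  if_pos ⟨h, h', hk⟩

theorem Ment_of_lt (h : i' + i < l) (h' : l ≤ l' + i) (hk : l' + i ≤ k) :
    Ment k i l i' l' = (qF * z1F * z2F) ^ (l' + i - l) * z2F ^ i := by
  unfold Ment
  rw [if_neg (by omega), if_pos ⟨h, h', hk⟩]

end Entries

section PentagonSum

variable {k i l : ℕ} (x y r : F)

theorem sum_Ment_row_of_lt {i' : ℕ} (h : i' + i < l) (hlk : l ≤ k) :
    ∑ l' ∈ range (k + 1), Ment k i l i' l' * x ^ (k - l') * y ^ (l' - i') * r ^ i' =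
      (z2F * x) ^ i * (y ^ (l - i - i') * r ^ i' *
        ∑ j ∈ range (k - l + 1), (z1F * (qF * z2F) * y) ^ j * x ^ (k - l - j)) := by
  rw [sum_range_succ_eq_sum_shift_of_eq_zero (a := l - i) (b := k - l) (by omega)
      fun l' hl' => by rw [Ment_eq_zero (by omega), zero_mul, zero_mul, zero_mul],
    mul_sum, mul_sum]
  refine sum_congr rfl fun j hj => ?_
  have hj : j ≤ k - l := Nat.lt_succ_iff.1 (mem_range.1 hj)
  rw [Ment_of_lt (by omega) (by omega) (by omega), show l - i + j + i - l = j by omega,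
    show k - (l - i + j) = i + (k - l - j) by omega,
    show l - i + j - i' = l - i - i' + j by omega]
  ring

theorem sum_Ment_row_of_le {s : ℕ} (hil : i ≤ l) (hlk : l ≤ k) (hs : s ≤ k - l) :
    ∑ l' ∈ range (k + 1),
        Ment k i l (l - i + s) l' * x ^ (k - l') * y ^ (l' - (l - i + s)) * r ^ (l - i + s) =
      (z2F * x) ^ i * (r ^ (l - i) * (r ^ s *
        ∑ j ∈ range (k - l - s + 1), (z1F * (qF * z2F) * y) ^ j * x ^ (k - l - s - j))) := by
  rw [sum_range_succ_eq_sum_shift_of_eq_zero (a := l - i + s) (b := k - l - s) (by omega)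
      fun l' hl' => by rw [Ment_eq_zero (by omega), zero_mul, zero_mul, zero_mul],
    mul_sum, mul_sum, mul_sum]
  refine sum_congr rfl fun j hj => ?_
  have hj : j ≤ k - l - s := Nat.lt_succ_iff.1 (mem_range.1 hj)
  rw [Ment_of_le (by omega) (by omega) (by omega), Nat.add_sub_cancel_left,
    show k - (l - i + s + j) = i + (k - l - s - j) by omega]
  ring

theorem sum_Ment_eq (hil : i ≤ l) (hlk : l ≤ k) :
    ∑ i' ∈ range (k + 1), ∑ l' ∈ range (k + 1),
        Ment k i l i' l' * x ^ (k - l') * y ^ (l' - i') * r ^ i' =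
      (z2F * x) ^ i *
        ((∑ i' ∈ range (l - i), y ^ (l - i - i') * r ^ i') *
            ∑ j ∈ range (k - l + 1), (z1F * (qF * z2F) * y) ^ j * x ^ (k - l - j) +
          r ^ (l - i) * ∑ s ∈ range (k - l + 1), r ^ s *
            ∑ j ∈ range (k - l - s + 1), (z1F * (qF * z2F) * y) ^ j * x ^ (k - l - s - j)) := by
  rw [sum_range_succ_eq_sum_shift_of_eq_zero (a := 0) (b := k - i) (by omega)
      fun i' hi' => sum_eq_zero fun l' _ => by
        rw [Ment_eq_zero (by omega), zero_mul, zero_mul, zero_mul],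
    show k - i + 1 = l - i + (k - l + 1) by omega, sum_range_add]
  simp only [zero_add]
  rw [sum_congr rfl fun i' hi' => sum_Ment_row_of_lt x y r (by grind) hlk,
    sum_congr rfl fun s hs => sum_Ment_row_of_le x y r hil hlk (by grind)]
  simp only [← mul_sum, ← sum_mul]
  ring

end PentagonSum

theorem mono_ne_zero (a b c : ℕ) : mono a b c ≠ 0 := by
  simp [mono, qF, z1F, z2F]

/-- Everything is written after the shift `S : z₂ ↦ q z₂`: `SP` is the shift of
`P = q^pa z₁^pb z₂^pc` (likewise `SQ`, `SR`), `g = S f`, and `_h1, …, _h4` say that the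
denominators of `Av, …, Ev` do not vanish. -/
theorem pentagon_decomposition_general (k : ℕ)
    (pa pb pc qa qb qc ra rb rc : ℕ) (g : F) :
    let SP : F := mono (pa + pc) pb pc
    let SQ : F := mono (qa + qc) qb qc
    let SR : F := mono (ra + rc) rb rc
    let ZQ : F := z1F * (qF * z2F) * SQ   -- the shift of z₁z₂Q
    ∀ _h1 : ZQ ≠ SP, ∀ _h2 : SR ≠ SQ, ∀ _h3 : SR ≠ SP, ∀ _h4 : ZQ ≠ SR,
    ∀ i l : ℕ, i ≤ l → l ≤ k →
    g * (∑ i' ∈ Finset.range (k + 1), ∑ l' ∈ Finset.range (k + 1),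
          Ment k i l i' l' * SP ^ (k - l') * SQ ^ (l' - i') * SR ^ i') =
    g * (SP ^ (k - l) * SQ ^ (l - i) * (z2F * SP) ^ i /
            ((1 - ZQ / SP) * (1 - SR / SQ))
        + (1 - SQ / SP) * SP ^ (k - l) * SR ^ (l - i) * (z2F * SP) ^ i /
            ((1 - ZQ / SP) * (1 - SQ / SR) * (1 - SR / SP))
        + ZQ ^ (k - l) * SQ ^ (l - i) * (z2F * SP) ^ i /
            ((1 - SP / ZQ) * (1 - SR / SQ))
        + (1 - (z1F * (qF * z2F))⁻¹) * ZQ ^ (k - l) * SR ^ (l - i) * (z2F * SP) ^ i /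
            ((1 - SP / ZQ) * (1 - SR / ZQ) * (1 - SQ / SR))
        + SR ^ (k - l) * SR ^ (l - i) * (z2F * SP) ^ i /
            ((1 - ZQ / SR) * (1 - SP / SR))) := by
  intro SP SQ SR ZQ h1 h2 h3 h4 i l hil hlk
  have hw : z1F * (qF * z2F) ≠ 0 := by simp [z1F, qF, z2F]
  rw [sum_Ment_eq SP SQ SR hil hlk, pentagon_sum_eq_vertex_sum (x := SP) (y := SQ) (r := SR)
    _ (mono_ne_zero _ _ _) (mono_ne_zero _ _ _) (mono_ne_zero _ _ _) hw h1 h2 h3 h4]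

/-- Decomposition of the pentagon transfer matrix through the extremal operators
`A,B,C,D,E`: for a simple vector `v = f·[P,Q,R]` with monomial entries
`P = q^{pa} z₁^{pb} z₂^{pc}` etc., the `(i,l)`-component of
`M(q,z₁,z₂) v(q,z₁,qz₂)` equals the sum of the `(i,l)`-components of
`Av, Bv, Cv, Dv, Ev` — all expressions written after applying the shift
`S : z₂ ↦ qz₂` (so `SP = q^{pa+pc} z₁^{pb} z₂^{pc}` is the shift of `P`, and
`g` stands for the shifted scalar part `S f`).  The hypotheses say that the
denominators occurring in the extremal operators do not vanish, i.e. that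
`Av,…,Ev` are all defined. -/
theorem pentagon_decomposition (k : ℕ) (hk : 1 ≤ k)
    (pa pb pc qa qb qc ra rb rc : ℕ) (g : F) :
    let SP : F := mono (pa + pc) pb pc
    let SQ : F := mono (qa + qc) qb qc
    let SR : F := mono (ra + rc) rb rc
    let ZQ : F := z1F * (qF * z2F) * SQ   -- the shift of z₁z₂Q
    ∀ _h1 : ZQ ≠ SP, ∀ _h2 : SR ≠ SQ, ∀ _h3 : SR ≠ SP, ∀ _h4 : ZQ ≠ SR,
    ∀ i l : ℕ, i ≤ l → l ≤ k →
    g * (∑ i' ∈ Finset.range (k + 1), ∑ l' ∈ Finset.range (k + 1),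
          Ment k i l i' l' * SP ^ (k - l') * SQ ^ (l' - i') * SR ^ i') =
    g * (SP ^ (k - l) * SQ ^ (l - i) * (z2F * SP) ^ i /
            ((1 - ZQ / SP) * (1 - SR / SQ))
        + (1 - SQ / SP) * SP ^ (k - l) * SR ^ (l - i) * (z2F * SP) ^ i /
            ((1 - ZQ / SP) * (1 - SQ / SR) * (1 - SR / SP))
        + ZQ ^ (k - l) * SQ ^ (l - i) * (z2F * SP) ^ i /
            ((1 - SP / ZQ) * (1 - SR / SQ))
        + (1 - (z1F * (qF * z2F))⁻¹) * ZQ ^ (k - l) * SR ^ (l - i) * (z2F * SP) ^ i /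
            ((1 - SP / ZQ) * (1 - SR / ZQ) * (1 - SQ / SR))
        + SR ^ (k - l) * SR ^ (l - i) * (z2F * SP) ^ i /
            ((1 - ZQ / SR) * (1 - SP / SR))) :=
  pentagon_decomposition_general k pa pb pc qa qb qc ra rb rc g

end Extremal
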